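/- arXiv:1502.02198 — 4 statements merged into one kernel-verified Lean document; each statement's English description precedes it below -/
import Mathlib

section
/- Let α be a type, f : α → ℂ a function, and A, B, C finite subsets of α that are mutually disjoint. Define the q-measure of a finite set S by μ(S) = |∑_{x ∈ S} f(x)|². Then μ(A ∪ B ∪ C) = μ(A ∪ B) + μ(A ∪ C) + μ(B ∪ C) − μ(A) − μ(B) − μ(C). -/
open Finset

/-- `‖x‖²` is a quadratic form, so its third finite difference vanishes. -/
theorem norm_add_add_sq {𝕜 E : Type*} [RCLike 𝕜] [NormedAddCommGroup E] [InnerProductSpace 𝕜 E]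
    (a b c : E) :
    ‖a + b + c‖ ^ 2 =
      ‖a + b‖ ^ 2 + ‖a + c‖ ^ 2 + ‖b + c‖ ^ 2 - ‖a‖ ^ 2 - ‖b‖ ^ 2 - ‖c‖ ^ 2 := by
  simp only [@norm_add_sq 𝕜, inner_add_left, map_add]
  ring

/-- Grade-2 additivity of the q-measure `μ S = |∑_{x ∈ S} f x|²` for mutually disjoint
finite sets. -/
theorem stmt_3 {α : Type*} [DecidableEq α] (f : α → ℂ) (A B C : Finset α)
    (hAB : Disjoint A B) (hAC : Disjoint A C) (hBC : Disjoint B C)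
    (μ : Finset α → ℝ) (hμ : ∀ S : Finset α, μ S = ‖∑ x ∈ S, f x‖ ^ 2) :
    μ (A ∪ B ∪ C) = μ (A ∪ B) + μ (A ∪ C) + μ (B ∪ C) - μ A - μ B - μ C := by
  have hABC : Disjoint (A ∪ B) C := disjoint_union_left.mpr ⟨hAC, hBC⟩
  simp only [hμ, sum_union hABC, sum_union hAB, sum_union hAC, sum_union hBC]
  exact norm_add_add_sq (𝕜 := ℂ) _ _ _
end

section
/- Let N be a natural number and c : Fin N → Fin 4 → ℂ satisfy both ∑_{k} c(j, k) = 1 and ∑_{k} |c(j, k)|² = 1 for every j, and let U : Matrix (Fin N × Fin 4) (Fin N) ℂ be defined by U((j, k), j′) = c(j, k) if j′ = j and 0 otherwise. If ρ : Matrix (Fin N) (Fin N) ℂ is positive semidefinite with trace 1 and satisfies ∑_{j, j′} ρ(j, j′) = 1 (i.e. ⟨ρ 1_N, 1_N⟩ = 1 for the all-ones vector 1_N), then U * ρ * Uᴴ is positive semidefinite with trace 1 and satisfies ∑_{(j,k), (j′,k′)} (U * ρ * Uᴴ)((j,k), (j′,k′)) = 1. -/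
/-!
`∑ₖ |c j k|² = 1` makes `U` an isometry, `Uᴴ U = 1`, so `ρ ↦ U ρ Uᴴ` preserves positivity and
(by cyclicity) the trace. `∑ₖ c j k = 1` gives `1 ᵥ* U = 1`, hence `Uᴴ *ᵥ 1 = 1`, so the sum of
all entries of `U ρ Uᴴ`, namely `(1 ᵥ* U) ⬝ᵥ ρ *ᵥ (Uᴴ *ᵥ 1)`, is that of `ρ`.
-/

open Matrix ComplexOrder

namespace Matrix

theorem sum_sum_mul_mul_apply {m n o R : Type*} [Fintype m] [Fintype n] [Fintype o] [Semiring R]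
    (A : Matrix m n R) (B : Matrix n o R) (C : Matrix o m R) :
    ∑ i, ∑ j, (A * B * C) i j = (1 ᵥ* A) ⬝ᵥ (B *ᵥ (C *ᵥ 1)) := by
  simp only [← dotProduct_mulVec, mulVec_mulVec, ← Matrix.mul_assoc, one_dotProduct, mulVec,
    dotProduct_one]

variable {ι κ R : Type*} [DecidableEq ι]

/-- The paper's basis vector `x̂_{n+1, 4j+k}` is indexed here by `(j, k)`. -/
def evolutionOperator [Zero R] (c : ι → κ → R) : Matrix (ι × κ) ι R :=
  of fun p j => if j = p.1 then c p.1 p.2 else 0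

variable [Fintype ι] [Fintype κ]

theorem conjTranspose_evolutionOperator_mul_self [Semiring R] [StarRing R] (c : ι → κ → R) :
    (evolutionOperator c)ᴴ * evolutionOperator c = diagonal fun j => ∑ k, star (c j k) * c j k := by
  ext j j'
  by_cases h : j = j'
  · subst h
    simp [evolutionOperator, mul_apply, Fintype.sum_prod_type]
  · simp [evolutionOperator, mul_apply, Fintype.sum_prod_type, h]

theorem one_vecMul_evolutionOperator [Semiring R] (c : ι → κ → R) :
    1 ᵥ* evolutionOperator c = fun j => ∑ k, c j k := by
  ext j
  simp [evolutionOperator, vecMul, dotProduct, Fintype.sum_prod_type]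

end Matrix

/-- If `ρ` is a stochastic state then so is `U ρ Uᴴ`. -/
theorem stmt_7 (N : ℕ) (c : Fin N → Fin 4 → ℂ)
    (hc1 : ∀ j, ∑ k, c j k = 1)
    (hc2 : ∀ j, ∑ k, ‖c j k‖ ^ 2 = 1)
    (U : Matrix (Fin N × Fin 4) (Fin N) ℂ)
    (hU : ∀ (j : Fin N) (k : Fin 4) (j' : Fin N),
      U (j, k) j' = if j' = j then c j k else 0)
    (ρ : Matrix (Fin N) (Fin N) ℂ) (hρ : ρ.PosSemidef) (htr : ρ.trace = 1)
    (hst : ∑ j, ∑ j', ρ j j' = 1) :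
    (U * ρ * Uᴴ).PosSemidef ∧ (U * ρ * Uᴴ).trace = 1 ∧
      ∑ p : Fin N × Fin 4, ∑ q : Fin N × Fin 4, (U * ρ * Uᴴ) p q = 1 := by
  obtain rfl : U = evolutionOperator c := by ext ⟨j, k⟩ j'; exact hU j k j'
  have hiso : (evolutionOperator c)ᴴ * evolutionOperator c = 1 := by
    rw [conjTranspose_evolutionOperator_mul_self, ← diagonal_one]
    congr 1; funext j
    simp only [Complex.star_def, Complex.conj_mul']
    exact_mod_cast hc2 j
  have hrow : 1 ᵥ* evolutionOperator c = 1 := by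
    rw [one_vecMul_evolutionOperator]; exact funext hc1
  have hcol : (evolutionOperator c)ᴴ *ᵥ 1 = 1 := by
    rw [← star_one, ← star_vecMul, hrow, star_one]
  refine ⟨hρ.mul_mul_conjTranspose_same _, ?_, ?_⟩
  · rw [trace_mul_cycle, hiso, one_mul, htr]
  · rw [sum_sum_mul_mul_apply, hrow, hcol, one_dotProduct]
    simpa [mulVec, dotProduct_one] using hst
end

section
/- Let N be a natural number and c : Fin N → Fin 4 → ℂ satisfy both ∑_{k} c(j, k) = 1 and ∑_{k} |c(j, k)|² = 1 for every j, and let U : Matrix (Fin N × Fin 4) (Fin N) ℂ be defined by U((j, k), j′) = c(j, k) if j′ = j and 0 otherwise. If v : Fin N → ℂ satisfies ∑_j |v(j)|² = 1 and ∑_j v(j) = 1, then w = U.mulVec v satisfies ∑_{(j,k)} |w(j,k)|² = 1 and ∑_{(j,k)} w(j,k) = 1. -/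
open Matrix

section

variable {ι κ R : Type*} [Fintype ι]

theorem mulVec_apply_of_apply_eq_ite [DecidableEq ι] [NonUnitalNonAssocSemiring R]
    (U : Matrix (ι × κ) ι R) (c : ι → κ → R)
    (hU : ∀ j k j', U (j, k) j' = if j' = j then c j k else 0) (v : ι → R) (j : ι) (k : κ) :
    (U *ᵥ v) (j, k) = c j k * v j := by
  simp only [mulVec, dotProduct, hU, ite_mul, zero_mul, Finset.sum_ite_eq', Finset.mem_univ,
    if_true]

theorem sum_prod_mul_of_sum_eq_one [Fintype κ] [NonAssocSemiring R] (c : ι → κ → R) (v : ι → R)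
    (hc : ∀ j, ∑ k, c j k = 1) :
    ∑ p : ι × κ, c p.1 p.2 * v p.1 = ∑ j, v j := by
  simp only [Fintype.sum_prod_type, ← Finset.sum_mul, hc, one_mul]

end

/-- If `v` is a stochastic state vector then so is `U.mulVec v`. -/
theorem stmt_8 (N : ℕ) (c : Fin N → Fin 4 → ℂ)
    (hc1 : ∀ j, ∑ k, c j k = 1)
    (hc2 : ∀ j, ∑ k, ‖c j k‖ ^ 2 = 1)
    (U : Matrix (Fin N × Fin 4) (Fin N) ℂ)
    (hU : ∀ (j : Fin N) (k : Fin 4) (j' : Fin N),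
      U (j, k) j' = if j' = j then c j k else 0)
    (v : Fin N → ℂ) (hv1 : ∑ j, ‖v j‖ ^ 2 = 1) (hv2 : ∑ j, v j = 1) :
    (∑ p : Fin N × Fin 4, ‖U.mulVec v p‖ ^ 2 = 1) ∧
      (∑ p : Fin N × Fin 4, U.mulVec v p = 1) := by
  have hw (p : Fin N × Fin 4) : (U *ᵥ v) p = c p.1 p.2 * v p.1 :=
    mulVec_apply_of_apply_eq_ite U c hU v p.1 p.2
  simp only [hw, norm_mul, mul_pow]
  exact ⟨(sum_prod_mul_of_sum_eq_one _ _ hc2).trans hv1,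
    (sum_prod_mul_of_sum_eq_one c v hc1).trans hv2⟩
end

section
/- Let c : Fin 4 → ℂ with ∑_{k} |c(k)|² = 1 and c(0) ≠ 0, and let M : Matrix (Fin 4) (Fin 4) ℂ be given by M(0, k) = c(0) · conj(c(k)) for k ≠ 0, M(k, 0) = −conj(c(0)) · c(k) for k ≠ 0, and M(i, j) = 0 otherwise. Set λ₊ = i·|c(0)|·√(1 − |c(0)|²) and λ₋ = −λ₊, and define v₊ = ![λ₊, −conj(c(0))·c(1), −conj(c(0))·c(2), −conj(c(0))·c(3)] and v₋ = ![λ₋, −conj(c(0))·c(1), −conj(c(0))·c(2), −conj(c(0))·c(3)]. Then M.mulVec v₊ = λ₊ • v₊ and M.mulVec v₋ = λ₋ • v₋; i.e. λ± are eigenvalues of M with eigenvectors v±. -/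
open Matrix Complex

/-!
`M` vanishes outside the off-diagonal part of its first row and column, so for any `λ` the vector
`v = (λ, M₁₀, M₂₀, M₃₀)` satisfies `(M v)ₖ = λ vₖ` for `k ≠ 0`, while `(M v)₀ = ∑ₖ M₀ₖ Mₖ₀`.
Hence `v` is a `λ`-eigenvector exactly when `λ² = ∑ₖ M₀ₖ Mₖ₀ = -|c⁰|² ∑_{k ≠ 0} |cᵏ|²`, and the
normalisation turns the right-hand side into `-|c⁰|² (1 - |c⁰|²) = λ±²`.
-/

theorem mulVec_eq_smul_of_eq_zero_of_iff {R : Type*} [CommRing R] {n : ℕ}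
    {M : Matrix (Fin (n + 1)) (Fin (n + 1)) R} (hM : ∀ i j, (i = 0 ↔ j = 0) → M i j = 0)
    {v : Fin (n + 1) → R} {lam : R} (hv0 : v 0 = lam) (hv : ∀ k : Fin n, v k.succ = M k.succ 0)
    (hlam : lam * lam = ∑ k : Fin n, M 0 k.succ * M k.succ 0) :
    M *ᵥ v = lam • v := by
  ext i
  refine Fin.cases ?_ (fun i => ?_) i
  · simp [mulVec, dotProduct, Fin.sum_univ_succ, hM 0 0 Iff.rfl, hv0, hv, hlam]
  · have hrow : ∀ k : Fin n, M i.succ k.succ = 0 := fun k =>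
      hM _ _ (iff_of_false (Fin.succ_ne_zero i) (Fin.succ_ne_zero k))
    simp [mulVec, dotProduct, Fin.sum_univ_succ, hrow, hv0, hv, mul_comm]

theorem sq_I_mul_mul_sqrt_one_sub_sq {r : ℝ} (hr : r ^ 2 ≤ 1) :
    (I * r * (√(1 - r ^ 2) : ℝ)) ^ 2 = -((r : ℂ) ^ 2 * (1 - (r : ℂ) ^ 2)) := by
  have hsqrt : ((√(1 - r ^ 2) : ℝ) : ℂ) ^ 2 = 1 - (r : ℂ) ^ 2 := by
    rw [← ofReal_pow, Real.sq_sqrt (by linarith)]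
    push_cast
    ring
  linear_combination (r : ℂ) ^ 2 * ((√(1 - r ^ 2) : ℝ) : ℂ) ^ 2 * I_sq - (r : ℂ) ^ 2 * hsqrt

theorem sum_succ_mul_conj_mul_neg_conj_mul {n : ℕ} (c : Fin (n + 1) → ℂ)
    (hc : ∑ k, ‖c k‖ ^ 2 = 1) :
    ∑ k : Fin n, c 0 * (starRingEnd ℂ) (c k.succ) * -((starRingEnd ℂ) (c 0) * c k.succ)
      = -((‖c 0‖ : ℂ) ^ 2 * (1 - (‖c 0‖ : ℂ) ^ 2)) := by
  have htail : ∑ k : Fin n, (‖c k.succ‖ : ℂ) ^ 2 = 1 - (‖c 0‖ : ℂ) ^ 2 := by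
    rw [Fin.sum_univ_succ] at hc
    exact_mod_cast eq_sub_of_add_eq' hc
  have hterm : ∀ k : Fin n, c 0 * (starRingEnd ℂ) (c k.succ) * -((starRingEnd ℂ) (c 0) * c k.succ)
      = -((‖c 0‖ : ℂ) ^ 2 * (‖c k.succ‖ : ℂ) ^ 2) := fun k => by
    rw [← mul_conj', ← mul_conj']
    ring
  simp only [hterm, ← Finset.mul_sum, Finset.sum_neg_distrib, htail]

theorem stmt_17_general (c : Fin 4 → ℂ) (hc : ∑ k, ‖c k‖ ^ 2 = 1)
    (M : Matrix (Fin 4) (Fin 4) ℂ)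
    (hM1 : ∀ k : Fin 4, k ≠ 0 → M 0 k = c 0 * (starRingEnd ℂ) (c k))
    (hM2 : ∀ k : Fin 4, k ≠ 0 → M k 0 = -((starRingEnd ℂ) (c 0) * c k))
    (hM3 : ∀ i j : Fin 4, ¬(i = 0 ∧ j ≠ 0) → ¬(i ≠ 0 ∧ j = 0) → M i j = 0)
    (lamPlus lamMinus : ℂ)
    (hlp : lamPlus = Complex.I * (‖c 0‖ : ℂ) *
      (Real.sqrt (1 - ‖c 0‖ ^ 2) : ℂ))
    (hlm : lamMinus = -lamPlus)
    (vPlus vMinus : Fin 4 → ℂ)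
    (hvp : vPlus = ![lamPlus, -((starRingEnd ℂ) (c 0) * c 1),
      -((starRingEnd ℂ) (c 0) * c 2), -((starRingEnd ℂ) (c 0) * c 3)])
    (hvm : vMinus = ![lamMinus, -((starRingEnd ℂ) (c 0) * c 1),
      -((starRingEnd ℂ) (c 0) * c 2), -((starRingEnd ℂ) (c 0) * c 3)]) :
    M.mulVec vPlus = lamPlus • vPlus ∧ M.mulVec vMinus = lamMinus • vMinus := by
  have hM : ∀ i j, (i = 0 ↔ j = 0) → M i j = 0 := fun i j h => hM3 i j (by tauto) (by tauto)
  have hnorm : ‖c 0‖ ^ 2 ≤ 1 := by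
    rw [← hc, Fin.sum_univ_succ]
    exact le_add_of_nonneg_right (Finset.sum_nonneg fun k _ => sq_nonneg _)
  have hcol : ∀ k : Fin 3, M k.succ 0 = -((starRingEnd ℂ) (c 0) * c k.succ) :=
    fun k => hM2 _ (Fin.succ_ne_zero k)
  have hlamPlus : lamPlus * lamPlus = ∑ k : Fin 3, M 0 k.succ * M k.succ 0 := by
    simp only [hM1 _ (Fin.succ_ne_zero _), hcol,
      sum_succ_mul_conj_mul_neg_conj_mul c hc, ← sq, hlp, sq_I_mul_mul_sqrt_one_sub_sq hnorm]
  constructor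
  · refine mulVec_eq_smul_of_eq_zero_of_iff hM (by simp [hvp]) (fun k => ?_) hlamPlus
    rw [hcol]
    fin_cases k <;> simp [hvp]
  · refine mulVec_eq_smul_of_eq_zero_of_iff hM (by simp [hvm]) (fun k => ?_)
      (by simp [hlm, hlamPlus])
    rw [hcol]
    fin_cases k <;> simp [hvm]

/-- The nonzero eigenvalues `λ± = ±i|c⁰|√(1-|c⁰|²)` of the commutator `M = [Q⁰, P⁰]`
with their eigenvectors. -/
theorem stmt_17 (c : Fin 4 → ℂ) (hc : ∑ k, ‖c k‖ ^ 2 = 1) (hc0 : c 0 ≠ 0)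
    (M : Matrix (Fin 4) (Fin 4) ℂ)
    (hM1 : ∀ k : Fin 4, k ≠ 0 → M 0 k = c 0 * (starRingEnd ℂ) (c k))
    (hM2 : ∀ k : Fin 4, k ≠ 0 → M k 0 = -((starRingEnd ℂ) (c 0) * c k))
    (hM3 : ∀ i j : Fin 4, ¬(i = 0 ∧ j ≠ 0) → ¬(i ≠ 0 ∧ j = 0) → M i j = 0)
    (lamPlus lamMinus : ℂ)
    (hlp : lamPlus = Complex.I * (‖c 0‖ : ℂ) *
      (Real.sqrt (1 - ‖c 0‖ ^ 2) : ℂ))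
    (hlm : lamMinus = -lamPlus)
    (vPlus vMinus : Fin 4 → ℂ)
    (hvp : vPlus = ![lamPlus, -((starRingEnd ℂ) (c 0) * c 1),
      -((starRingEnd ℂ) (c 0) * c 2), -((starRingEnd ℂ) (c 0) * c 3)])
    (hvm : vMinus = ![lamMinus, -((starRingEnd ℂ) (c 0) * c 1),
      -((starRingEnd ℂ) (c 0) * c 2), -((starRingEnd ℂ) (c 0) * c 3)]) :
    M.mulVec vPlus = lamPlus • vPlus ∧ M.mulVec vMinus = lamMinus • vMinus :=
  stmt_17_general c hc M hM1 hM2 hM3 lamPlus lamMinus hlp hlm vPlus vMinus hvp hvm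
end
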